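/- If s is a source (no incoming edges) of a DAG G, then s is a simplicial vertex of the marginal independence graph of G. -/

import Mathlib

/-- `w` is an ancestor of `u` in the directed graph `R` (every node is its own ancestor). -/
def Ancestor {V : Type*} (R : V → V → Prop) (w u : V) : Prop :=
  Relation.ReflTransGen R w u

/-- `u` and `v` have a common ancestor in `R`. -/
def CommonAnc {V : Type*} (R : V → V → Prop) (u v : V) : Prop :=
  ∃ w, Ancestor R w u ∧ Ancestor R w v

/-- `R` is acyclic (a DAG): no directed cycle. -/
def Acyclic {V : Type*} (R : V → V → Prop) : Prop :=
  ∀ v, ¬ Relation.TransGen R v v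

/-- The DAG `R` is faithful to the undirected graph `U`: distinct nodes are
adjacent in `U` iff they have a common ancestor in `R`. -/
def Faithful {V : Type*} (R : V → V → Prop) (U : SimpleGraph V) : Prop :=
  ∀ u v, u ≠ v → (U.Adj u v ↔ CommonAnc R u v)

/-- Closed neighborhood of `v` in `U`. -/
def Bd {V : Type*} (U : SimpleGraph V) (v : V) : Set V :=
  insert v (U.neighborSet v)

/-- `v` is simplicial in `U`: its closed neighborhood is a clique. -/
def Simplicial {V : Type*} (U : SimpleGraph V) (v : V) : Prop :=
  U.IsClique (Bd U v)

/-! A source `s` is its own only ancestor, so every neighbour of `s` in `U` is a descendant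
of `s`; any two vertices of the closed neighbourhood then have `s` as a common ancestor. -/

section

variable {V : Type*} {R : V → V → Prop}

theorem Ancestor.eq_of_forall_not_rel {w s : V} (hsource : ∀ x, ¬ R x s)
    (h : Ancestor R w s) : w = s := by
  rcases Relation.ReflTransGen.cases_tail h with rfl | ⟨x, -, hxs⟩
  · rfl
  · exact absurd hxs (hsource x)

variable {U : SimpleGraph V}

theorem Faithful.ancestor_of_mem_bd (hfaith : Faithful R U) {s a : V}
    (hsource : ∀ x, ¬ R x s) (ha : a ∈ Bd U s) : Ancestor R s a := by
  rcases ha with rfl | hadj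
  · exact Relation.ReflTransGen.refl
  · obtain ⟨w, hws, hwa⟩ := (hfaith s a (U.ne_of_adj hadj)).mp hadj
    rwa [← hws.eq_of_forall_not_rel hsource]

theorem Faithful.isClique_of_ancestor (hfaith : Faithful R U) {w : V} {S : Set V}
    (hS : ∀ a ∈ S, Ancestor R w a) : U.IsClique S :=
  fun a ha b hb hab => (hfaith a b hab).mpr ⟨w, hS a ha, hS b hb⟩

end

theorem stmt13_general {V : Type*} (R : V → V → Prop) (U : SimpleGraph V)
    (hfaith : Faithful R U)
    (s : V) (hsource : ∀ x, ¬ R x s) :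
    Simplicial U s :=
  hfaith.isClique_of_ancestor fun _ ha => hfaith.ancestor_of_mem_bd hsource ha

theorem stmt13 {V : Type*} (R : V → V → Prop) (U : SimpleGraph V)
    (hacyc : Acyclic R) (hfaith : Faithful R U)
    (s : V) (hsource : ∀ x, ¬ R x s) :
    Simplicial U s :=
  stmt13_general R U hfaith s hsource
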